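/- Let n ≥ 1 and let S : ℝ → ℝ be differentiable on [0,∞) with 0 < S(y) ≤ 1 for all y ≥ 0 and with S′(y) = −f(y) where f : [0,∞) → ℝ is nonnegative and nonincreasing. Let g : ℝ → ℝ satisfy 0 < g(t) < 1 for every t > 0, g antitone and convex on (0,∞). Let v, u, α, β : Fin n → ℝ be positive nondecreasing tuples such that for every k = 1,…,n: Σ_{i=1}^k α i ≤ Σ_{i=1}^k β i and Σ_{i=1}^k v i ≤ Σ_{i=1}^k u i. Let q₁, q₂ : {1,…,n} → ℝ be nonnegative with Σ_{m=1}^n q₁(m) = Σ_{m=1}^n q₂(m) = 1 and Σ_{m=k}^n q₂(m) ≤ Σ_{m=k}^n q₁(m) for every k. Then for every x ≥ 0: Σ_{m=1}^n q₁(m) · ∏_{i=1}^m (1 − g(v i)·S(α i · x)) ≤ Σ_{m=1}^n q₂(m) · ∏_{i=1}^m (1 − g(u i)·S(β i · x)). -/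

import Mathlib

/-! Taking logarithms turns a product of factors `1 - cᵢ φ(tᵢ)` into a sum of increasing concave
functions `hᵢ(t) = log (1 - cᵢ φ t)` whose slopes decrease in `i` when `c` is antitone. Abel
summation against these slopes shows that such a sum only grows when the increasing tuple `t` is
replaced by one with larger prefix sums (a Tomić–Weyl inequality). This is applied twice: to the
indicator parameters `v → u` with `cᵢ = S(αᵢ x)`, and to the scales `α → β` with `cᵢ = g(uᵢ)`,
using that `S` is decreasing and convex because `S' = -f` is nondecreasing. A last Abel summation
averages over the number of claims: the products decrease in `m`, and `N₂ ≤_st N₁`. -/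

open Finset

/-- Sum of the first `k` entries of the tuple `a`. -/
noncomputable def prefixSum {n : ℕ} (a : Fin n → ℝ) (k : ℕ) : ℝ :=
  ∑ i ∈ Finset.univ.filter (fun i : Fin n => (i : ℕ) < k), a i

/-- Product of the first `m` entries of the tuple `c`. -/
noncomputable def prefixProd {n : ℕ} (c : Fin n → ℝ) (m : ℕ) : ℝ :=
  ∏ i ∈ Finset.univ.filter (fun i : Fin n => (i : ℕ) < m), c i

lemma sum_mul_nonneg_of_partialSum_nonneg {ι : Type*} [LinearOrder ι] (s : Finset ι)
    {e D : ι → ℝ} (hD_nonneg : ∀ i ∈ s, e i ≠ 0 → 0 ≤ D i)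
    (hD_anti : ∀ i ∈ s, ∀ j ∈ s, i ≤ j → e i ≠ 0 → e j ≠ 0 → D j ≤ D i)
    (he : ∀ k ∈ s, 0 ≤ ∑ i ∈ s with i ≤ k, e i) :
    0 ≤ ∑ i ∈ s, D i * e i := by
  classical
  induction s using Finset.induction_on_max generalizing D with
  | empty => simp
  | insert a s ha ih =>
    have has : a ∉ s := fun h => lt_irrefl a (ha a h)
    have he_s : ∀ k ∈ s, 0 ≤ ∑ i ∈ s with i ≤ k, e i := fun k hk => by
      simpa [filter_insert, (ha k hk).not_ge] using he k (mem_insert_of_mem hk)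
    have he_total : 0 ≤ ∑ i ∈ insert a s, e i := by
      simpa [filter_true_of_mem (fun i hi => (mem_insert.mp hi).elim le_of_eq
        (fun h => (ha i h).le))] using he a (mem_insert_self a s)
    by_cases hea : e a = 0
    · rw [sum_insert has, hea, mul_zero, zero_add]
      exact ih (fun i hi => hD_nonneg i (mem_insert_of_mem hi))
        (fun i hi j hj => hD_anti i (mem_insert_of_mem hi) j (mem_insert_of_mem hj)) he_s
    · have hsplit : ∑ i ∈ insert a s, D i * e i
          = ∑ i ∈ s, (D i - D a) * e i + D a * ∑ i ∈ insert a s, e i := by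
        simp only [sum_insert has, mul_add, mul_sum, sub_mul, sum_sub_distrib]
        ring
      have hrest : 0 ≤ ∑ i ∈ s, (D i - D a) * e i := by
        refine ih (fun i hi hei => ?_) (fun i hi j hj hij hei hej => ?_) he_s
        · exact sub_nonneg.mpr (hD_anti i (mem_insert_of_mem hi) a (mem_insert_self a s)
            (ha i hi).le hei hea)
        · exact sub_le_sub_right (hD_anti i (mem_insert_of_mem hi) j (mem_insert_of_mem hj)
            hij hei hej) _
      rw [hsplit]
      exact add_nonneg hrest
        (mul_nonneg (hD_nonneg a (mem_insert_self a s) hea) he_total)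

lemma ConvexOn.slope_le_slope {s : Set ℝ} {f : ℝ → ℝ} (hf : ConvexOn ℝ s f)
    {a b a' b' : ℝ} (ha : a ∈ s) (hb : b ∈ s) (ha' : a' ∈ s) (hb' : b' ∈ s)
    (hab : a ≠ b) (hab' : a' ≠ b') (haa' : a ≤ a') (hbb' : b ≤ b') :
    slope f a b ≤ slope f a' b' := by
  have secant {p x y : ℝ} (hp : p ∈ s) (hx : x ∈ s) (hy : y ∈ s) (hxp : x ≠ p) (hyp : y ≠ p)
      (hxy : x ≤ y) : slope f p x ≤ slope f p y := by
    simpa only [slope_def_field] using hf.secant_mono hp hx hy hxp hyp hxy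
  -- Move one endpoint at a time, choosing the order that keeps the two points distinct.
  rcases hab.lt_or_gt with hlt | hlt
  · calc slope f a b ≤ slope f a b' := secant ha hb hb' hab.symm (hlt.trans_le hbb').ne' hbb'
      _ = slope f b' a := slope_comm f a b'
      _ ≤ slope f b' a' := secant hb' ha ha' (hlt.trans_le hbb').ne hab' haa'
      _ = slope f a' b' := slope_comm f b' a'
  · calc slope f a b = slope f b a := slope_comm f a b
      _ ≤ slope f b a' := secant hb ha ha' hab (hlt.trans_le haa').ne' haa'
      _ = slope f a' b := slope_comm f b a'
      _ ≤ slope f a' b' := secant ha' hb hb' (hlt.trans_le haa').ne hab'.symm hbb'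

lemma ConcaveOn.slope_le_slope {s : Set ℝ} {f : ℝ → ℝ} (hf : ConcaveOn ℝ s f)
    {a b a' b' : ℝ} (ha : a ∈ s) (hb : b ∈ s) (ha' : a' ∈ s) (hb' : b' ∈ s)
    (hab : a ≠ b) (hab' : a' ≠ b') (haa' : a ≤ a') (hbb' : b ≤ b') :
    slope f a' b' ≤ slope f a b := by
  simpa using hf.neg.slope_le_slope ha hb ha' hb' hab hab' haa' hbb'

lemma sum_le_sum_of_partialSum_le {ι : Type*} [LinearOrder ι] (t : Finset ι) {s : Set ℝ}
    {h : ι → ℝ → ℝ} {v u : ι → ℝ} (hv : ∀ i ∈ t, v i ∈ s) (hu : ∀ i ∈ t, u i ∈ s)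
    (hvm : MonotoneOn v t) (hum : MonotoneOn u t)
    (hh_mono : ∀ i ∈ t, MonotoneOn (h i) s) (hh_conc : ∀ i ∈ t, ConcaveOn ℝ s (h i))
    (hh_sub : ∀ i ∈ t, ∀ j ∈ t, i ≤ j → MonotoneOn (fun y => h i y - h j y) s)
    (hmaj : ∀ k ∈ t, ∑ i ∈ t with i ≤ k, v i ≤ ∑ i ∈ t with i ≤ k, u i) :
    ∑ i ∈ t, h i (v i) ≤ ∑ i ∈ t, h i (u i) := by
  have hslope_sub (i j : ι) (a b : ℝ) :
      slope (fun y => h i y - h j y) a b = slope (h i) a b - slope (h j) a b := by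
    simp only [slope_def_field]; ring
  have habel := sum_mul_nonneg_of_partialSum_nonneg t
    (e := fun i => u i - v i) (D := fun i => slope (h i) (v i) (u i))
    (fun i hi _ => (hh_mono i hi).slope_nonneg (hv i hi) (hu i hi))
    (fun i hi j hj hij hei hej => ?_)
    (fun k hk => by simpa only [sum_sub_distrib, sub_nonneg] using hmaj k hk)
  · have hterm : ∀ i ∈ t, slope (h i) (v i) (u i) * (u i - v i) = h i (u i) - h i (v i) :=
      fun i _ => by rw [mul_comm, ← smul_eq_mul, sub_smul_slope, vsub_eq_sub]
    rw [sum_congr rfl hterm, sum_sub_distrib, sub_nonneg] at habel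
    exact habel
  · calc slope (h j) (v j) (u j) ≤ slope (h i) (v j) (u j) := by
          have := (hh_sub i hi j hj hij).slope_nonneg (hv j hj) (hu j hj)
          rw [hslope_sub] at this
          linarith
      _ ≤ slope (h i) (v i) (u i) :=
          (hh_conc i hi).slope_le_slope (hv i hi) (hu i hi) (hv j hj) (hu j hj)
            (sub_ne_zero.mp hei).symm (sub_ne_zero.mp hej).symm (hvm hi hj hij) (hum hi hj hij)

section OneSubMul

variable {s : Set ℝ} {φ : ℝ → ℝ} {c c' : ℝ}

lemma monotoneOn_log_one_sub_mul (hc : 0 ≤ c) (hφ : AntitoneOn φ s)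
    (hcφ : ∀ y ∈ s, c * φ y < 1) : MonotoneOn (fun y => Real.log (1 - c * φ y)) s :=
  fun x hx _ hy hxy => Real.log_le_log (sub_pos.mpr (hcφ x hx))
    (sub_le_sub_left (mul_le_mul_of_nonneg_left (hφ hx hy hxy) hc) 1)

lemma concaveOn_log_one_sub_mul (hc : 0 ≤ c) (hφ : ConvexOn ℝ s φ)
    (hcφ : ∀ y ∈ s, c * φ y < 1) : ConcaveOn ℝ s (fun y => Real.log (1 - c * φ y)) := by
  refine ⟨hφ.1, fun x hx y hy a b ha hb hab => ?_⟩
  have hFx : 0 < 1 - c * φ x := sub_pos.mpr (hcφ x hx)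
  have hFy : 0 < 1 - c * φ y := sub_pos.mpr (hcφ y hy)
  have hφxy := mul_le_mul_of_nonneg_left (hφ.2 hx hy ha hb hab) hc
  simp only [smul_eq_mul] at hφxy ⊢
  calc a * Real.log (1 - c * φ x) + b * Real.log (1 - c * φ y)
      ≤ Real.log (a * (1 - c * φ x) + b * (1 - c * φ y)) := by
        simpa using strictConcaveOn_log_Ioi.concaveOn.2 hFx hFy ha hb hab
    _ ≤ Real.log (1 - c * φ (a * x + b * y)) := by
        have hpos := (convex_Ioi (0 : ℝ)) hFx hFy ha hb hab
        rw [Set.mem_Ioi, smul_eq_mul, smul_eq_mul] at hpos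
        refine Real.log_le_log hpos ?_
        linear_combination hφxy + hab

lemma monotoneOn_log_one_sub_mul_sub (hcc' : c' ≤ c) (hφ : AntitoneOn φ s)
    (hcφ : ∀ y ∈ s, c * φ y < 1) (hc'φ : ∀ y ∈ s, c' * φ y < 1) :
    MonotoneOn (fun y => Real.log (1 - c * φ y) - Real.log (1 - c' * φ y)) s := by
  intro x hx y hy hxy
  have h := Real.log_le_log (mul_pos (sub_pos.mpr (hcφ x hx)) (sub_pos.mpr (hc'φ y hy)))
    (show (1 - c * φ x) * (1 - c' * φ y) ≤ (1 - c * φ y) * (1 - c' * φ x) by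
      nlinarith [mul_nonneg (sub_nonneg.mpr hcc') (sub_nonneg.mpr (hφ hx hy hxy))])
  rw [Real.log_mul (sub_pos.mpr (hcφ x hx)).ne' (sub_pos.mpr (hc'φ y hy)).ne',
    Real.log_mul (sub_pos.mpr (hcφ y hy)).ne' (sub_pos.mpr (hc'φ x hx)).ne'] at h
  dsimp only
  linarith

end OneSubMul

lemma sum_filter_le_eq_prefixSum {n m : ℕ} (a : Fin n → ℝ) {k : Fin n} (hk : (k : ℕ) < m) :
    ∑ i ∈ univ.filter (fun i : Fin n => (i : ℕ) < m) with i ≤ k, a i = prefixSum a (k + 1) := by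
  unfold prefixSum
  congr 1
  ext i
  simp only [mem_filter, mem_univ, true_and, Fin.le_iff_val_le_val]
  omega

lemma prefixProd_one_sub_mul_le {n : ℕ} {s : Set ℝ} {c : Fin n → ℝ} {φ : ℝ → ℝ}
    {v u : Fin n → ℝ} (hc : ∀ i, 0 ≤ c i) (hc_anti : Antitone c)
    (hφ_anti : AntitoneOn φ s) (hφ_conv : ConvexOn ℝ s φ) (hcφ : ∀ i, ∀ y ∈ s, c i * φ y < 1)
    (hv : ∀ i, v i ∈ s) (hu : ∀ i, u i ∈ s) (hvm : Monotone v) (hum : Monotone u)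
    (hmaj : ∀ k, 1 ≤ k → k ≤ n → prefixSum v k ≤ prefixSum u k) (m : ℕ) :
    prefixProd (fun i => 1 - c i * φ (v i)) m ≤ prefixProd (fun i => 1 - c i * φ (u i)) m := by
  have hF (i : Fin n) {y : ℝ} (hy : y ∈ s) : 0 < 1 - c i * φ y := sub_pos.mpr (hcφ i y hy)
  unfold prefixProd
  rw [← Real.log_le_log_iff (prod_pos fun i _ => hF i (hv i)) (prod_pos fun i _ => hF i (hu i)),
    Real.log_prod fun i _ => (hF i (hv i)).ne', Real.log_prod fun i _ => (hF i (hu i)).ne']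
  refine sum_le_sum_of_partialSum_le _ (h := fun i y => Real.log (1 - c i * φ y))
    (fun i _ => hv i) (fun i _ => hu i) (hvm.monotoneOn _) (hum.monotoneOn _)
    (fun i _ => monotoneOn_log_one_sub_mul (hc i) hφ_anti (hcφ i))
    (fun i _ => concaveOn_log_one_sub_mul (hc i) hφ_conv (hcφ i))
    (fun i _ j _ hij => monotoneOn_log_one_sub_mul_sub (hc_anti hij) hφ_anti (hcφ i) (hcφ j))
    (fun k hk => ?_)
  have hkm : (k : ℕ) < m := (mem_filter.mp hk).2
  rw [sum_filter_le_eq_prefixSum v hkm, sum_filter_le_eq_prefixSum u hkm]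
  exact hmaj _ (Nat.le_add_left 1 k) k.isLt

lemma sum_mul_le_sum_mul_of_partialSum_le {ι : Type*} [LinearOrder ι] (t : Finset ι)
    {q₁ q₂ P : ι → ℝ} (hP : ∀ i ∈ t, 0 ≤ P i) (hP_anti : AntitoneOn P t)
    (hq : ∀ k ∈ t, ∑ i ∈ t with i ≤ k, q₁ i ≤ ∑ i ∈ t with i ≤ k, q₂ i) :
    ∑ i ∈ t, q₁ i * P i ≤ ∑ i ∈ t, q₂ i * P i := by
  have := sum_mul_nonneg_of_partialSum_nonneg t (e := fun i => q₂ i - q₁ i) (D := P)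
    (fun i hi _ => hP i hi) (fun i hi j hj hij _ _ => hP_anti hi hj hij)
    (fun k hk => by simpa only [sum_sub_distrib, sub_nonneg] using hq k hk)
  simp only [mul_sub, sum_sub_distrib, sub_nonneg] at this
  simpa only [mul_comm] using this

lemma sum_Icc_le_of_tail_le {n : ℕ} {q₁ q₂ : ℕ → ℝ}
    (hsum : ∑ m ∈ Icc 1 n, q₁ m = ∑ m ∈ Icc 1 n, q₂ m)
    (htail : ∀ k, 1 ≤ k → k ≤ n → ∑ m ∈ Icc k n, q₂ m ≤ ∑ m ∈ Icc k n, q₁ m)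
    {k : ℕ} (hk : k ≤ n) : ∑ m ∈ Icc 1 k, q₁ m ≤ ∑ m ∈ Icc 1 k, q₂ m := by
  have htail' : ∑ m ∈ Icc (k + 1) n, q₂ m ≤ ∑ m ∈ Icc (k + 1) n, q₁ m := by
    rcases hk.lt_or_eq with hlt | rfl
    · exact htail (k + 1) (Nat.le_add_left 1 k) hlt
    · simp
  have h₁ := sum_Ioc_consecutive q₁ (Nat.zero_le k) hk
  have h₂ := sum_Ioc_consecutive q₂ (Nat.zero_le k) hk
  simp only [← Icc_add_one_left_eq_Ioc, zero_add] at h₁ h₂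
  linarith

lemma prefixProd_nonneg {n : ℕ} {c : Fin n → ℝ} (hc : ∀ i, 0 ≤ c i) (m : ℕ) :
    0 ≤ prefixProd c m :=
  prod_nonneg fun i _ => hc i

lemma prefixProd_antitone {n : ℕ} {c : Fin n → ℝ} (hc₀ : ∀ i, 0 ≤ c i) (hc₁ : ∀ i, c i ≤ 1) :
    Antitone (prefixProd c) :=
  fun _ _ hkl => prod_anti_set_of_le_one hc₀ hc₁ (monotone_filter_right _ fun i hi => by omega)

lemma antitoneOn_Ici_of_hasDerivAt {F F' : ℝ → ℝ} (hF : ∀ y ≥ 0, HasDerivAt F (F' y) y)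
    (hF' : ∀ y > 0, F' y ≤ 0) : AntitoneOn F (Set.Ici 0) := by
  refine antitoneOn_of_deriv_nonpos (convex_Ici 0)
    (fun y hy => (hF y hy).continuousAt.continuousWithinAt) ?_ ?_ <;> rw [interior_Ici]
  · exact fun y hy => (hF y (le_of_lt hy)).differentiableAt.differentiableWithinAt
  · exact fun y hy => (hF y (le_of_lt hy)).deriv ▸ hF' y hy

lemma convexOn_Ici_of_hasDerivAt {F F' : ℝ → ℝ} (hF : ∀ y ≥ 0, HasDerivAt F (F' y) y)
    (hF' : MonotoneOn F' (Set.Ioi 0)) : ConvexOn ℝ (Set.Ici 0) F := by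
  refine MonotoneOn.convexOn_of_deriv (convex_Ici 0)
    (fun y hy => (hF y hy).continuousAt.continuousWithinAt) ?_ ?_ <;> rw [interior_Ici]
  · exact fun y hy => (hF y (le_of_lt hy)).differentiableAt.differentiableWithinAt
  · intro a ha b hb hab
    rw [(hF a (le_of_lt ha)).deriv, (hF b (le_of_lt hb)).deriv]
    exact hF' ha hb hab

lemma AntitoneOn.comp_mul_const {F : ℝ → ℝ} (hF : AntitoneOn F (Set.Ici 0)) {x : ℝ}
    (hx : 0 ≤ x) : AntitoneOn (fun y => F (y * x)) (Set.Ici 0) :=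
  fun _ ha _ hb hab => hF (mul_nonneg ha hx) (mul_nonneg hb hx) (mul_le_mul_of_nonneg_right hab hx)

lemma ConvexOn.comp_mul_const {F : ℝ → ℝ} (hF : ConvexOn ℝ (Set.Ici 0) F) {x : ℝ}
    (hx : 0 ≤ x) : ConvexOn ℝ (Set.Ici 0) (fun y => F (y * x)) :=
  (hF.comp_linearMap (LinearMap.mulRight ℝ x)).subset (fun _ hy => mul_nonneg hy hx)
    (convex_Ici 0)

theorem stmt_7_general {n : ℕ} (S f g : ℝ → ℝ)
    (hS : ∀ y ≥ (0 : ℝ), 0 < S y ∧ S y ≤ 1)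
    (hS' : ∀ y ≥ (0 : ℝ), HasDerivAt S (-(f y)) y)
    (hf_nonneg : ∀ y ≥ (0 : ℝ), 0 ≤ f y)
    (hf_anti : AntitoneOn f (Set.Ici 0))
    (hg : ∀ t > 0, 0 < g t ∧ g t < 1)
    (hg_anti : AntitoneOn g (Set.Ioi 0))
    (hg_conv : ConvexOn ℝ (Set.Ioi 0) g)
    (v u α β : Fin n → ℝ)
    (hv : ∀ i, 0 < v i) (hu : ∀ i, 0 < u i)
    (hα : ∀ i, 0 < α i) (hβ : ∀ i, 0 < β i)
    (hvm : Monotone v) (hum : Monotone u) (hαm : Monotone α) (hβm : Monotone β)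
    (hmajα : ∀ k, 1 ≤ k → k ≤ n → prefixSum α k ≤ prefixSum β k)
    (hmajv : ∀ k, 1 ≤ k → k ≤ n → prefixSum v k ≤ prefixSum u k)
    (q₁ q₂ : ℕ → ℝ)
    (hq₁ : ∀ m ∈ Finset.Icc 1 n, 0 ≤ q₁ m)
    (hq₁sum : ∑ m ∈ Finset.Icc 1 n, q₁ m = 1)
    (hq₂sum : ∑ m ∈ Finset.Icc 1 n, q₂ m = 1)
    (hst : ∀ k, 1 ≤ k → k ≤ n →
      ∑ m ∈ Finset.Icc k n, q₂ m ≤ ∑ m ∈ Finset.Icc k n, q₁ m) :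
    ∀ x ≥ (0 : ℝ),
      ∑ m ∈ Finset.Icc 1 n,
          q₁ m * prefixProd (fun i => 1 - g (v i) * S (α i * x)) m ≤
        ∑ m ∈ Finset.Icc 1 n,
          q₂ m * prefixProd (fun i => 1 - g (u i) * S (β i * x)) m := by
  intro x hx
  have hS_anti : AntitoneOn S (Set.Ici 0) :=
    antitoneOn_Ici_of_hasDerivAt hS' fun y hy => neg_nonpos.mpr (hf_nonneg y hy.le)
  have hS_conv : ConvexOn ℝ (Set.Ici 0) S :=
    convexOn_Ici_of_hasDerivAt hS' (hf_anti.neg.mono Set.Ioi_subset_Ici_self)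
  have hgS : ∀ t > 0, ∀ y ≥ 0, g t * S y < 1 := fun t ht y hy =>
    (mul_le_of_le_one_right (hg t ht).1.le (hS y hy).2).trans_lt (hg t ht).2
  have hαx (i : Fin n) : 0 ≤ α i * x := mul_nonneg (hα i).le hx
  have hβx (i : Fin n) : 0 ≤ β i * x := mul_nonneg (hβ i).le hx
  have hA (m : ℕ) : prefixProd (fun i => 1 - g (v i) * S (α i * x)) m ≤
      prefixProd (fun i => 1 - g (u i) * S (α i * x)) m := by
    simpa only [mul_comm (S _)] using prefixProd_one_sub_mul_le (c := fun i => S (α i * x))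
      (fun i => (hS _ (hαx i)).1.le)
      (fun i j hij => hS_anti.comp_mul_const hx (hα i).le (hα j).le (hαm hij))
      hg_anti hg_conv (fun i y hy => mul_comm (g y) _ ▸ hgS y hy _ (hαx i)) hv hu hvm hum hmajv m
  have hB (m : ℕ) : prefixProd (fun i => 1 - g (u i) * S (α i * x)) m ≤
      prefixProd (fun i => 1 - g (u i) * S (β i * x)) m :=
    prefixProd_one_sub_mul_le (s := Set.Ici 0) (fun i => (hg _ (hu i)).1.le)
      (fun i j hij => hg_anti (hu i) (hu j) (hum hij)) (hS_anti.comp_mul_const hx)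
      (hS_conv.comp_mul_const hx) (fun i y hy => hgS _ (hu i) _ (mul_nonneg hy hx))
      (fun i => (hα i).le) (fun i => (hβ i).le) hαm hβm hmajα m
  have hw₀ (i : Fin n) : 0 ≤ 1 - g (u i) * S (β i * x) :=
    sub_nonneg.mpr (hgS _ (hu i) _ (hβx i)).le
  have hw₁ (i : Fin n) : 1 - g (u i) * S (β i * x) ≤ 1 :=
    sub_le_self _ (mul_nonneg (hg _ (hu i)).1.le (hS _ (hβx i)).1.le)
  calc _ ≤ ∑ m ∈ Icc 1 n, q₁ m * prefixProd (fun i => 1 - g (u i) * S (β i * x)) m :=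
        sum_le_sum fun m hm => mul_le_mul_of_nonneg_left ((hA m).trans (hB m)) (hq₁ m hm)
    _ ≤ _ := by
      refine sum_mul_le_sum_mul_of_partialSum_le _ (fun m _ => prefixProd_nonneg hw₀ m)
        ((prefixProd_antitone hw₀ hw₁).antitoneOn _) fun k hk => ?_
      have hkn := (mem_Icc.mp hk).2
      rw [show {i ∈ Icc 1 n | i ≤ k} = Icc 1 k by ext i; simp only [mem_filter, mem_Icc]; omega]
      exact sum_Icc_le_of_tail_le (hq₁sum.trans hq₂sum.symm) hst hkn

/-- Theorem 3.7: scale-family severities, largest claim amounts with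
random numbers of claims, usual stochastic order. -/
theorem stmt_7 {n : ℕ} (hn : 1 ≤ n) (S f g : ℝ → ℝ)
    (hS : ∀ y ≥ (0 : ℝ), 0 < S y ∧ S y ≤ 1)
    (hS' : ∀ y ≥ (0 : ℝ), HasDerivAt S (-(f y)) y)
    (hf_nonneg : ∀ y ≥ (0 : ℝ), 0 ≤ f y)
    (hf_anti : AntitoneOn f (Set.Ici 0))
    (hg : ∀ t > 0, 0 < g t ∧ g t < 1)
    (hg_anti : AntitoneOn g (Set.Ioi 0))
    (hg_conv : ConvexOn ℝ (Set.Ioi 0) g)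
    (v u α β : Fin n → ℝ)
    (hv : ∀ i, 0 < v i) (hu : ∀ i, 0 < u i)
    (hα : ∀ i, 0 < α i) (hβ : ∀ i, 0 < β i)
    (hvm : Monotone v) (hum : Monotone u) (hαm : Monotone α) (hβm : Monotone β)
    (hmajα : ∀ k, 1 ≤ k → k ≤ n → prefixSum α k ≤ prefixSum β k)
    (hmajv : ∀ k, 1 ≤ k → k ≤ n → prefixSum v k ≤ prefixSum u k)
    (q₁ q₂ : ℕ → ℝ)
    (hq₁ : ∀ m ∈ Finset.Icc 1 n, 0 ≤ q₁ m) (hq₂ : ∀ m ∈ Finset.Icc 1 n, 0 ≤ q₂ m)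
    (hq₁sum : ∑ m ∈ Finset.Icc 1 n, q₁ m = 1)
    (hq₂sum : ∑ m ∈ Finset.Icc 1 n, q₂ m = 1)
    (hst : ∀ k, 1 ≤ k → k ≤ n →
      ∑ m ∈ Finset.Icc k n, q₂ m ≤ ∑ m ∈ Finset.Icc k n, q₁ m) :
    ∀ x ≥ (0 : ℝ),
      ∑ m ∈ Finset.Icc 1 n,
          q₁ m * prefixProd (fun i => 1 - g (v i) * S (α i * x)) m ≤
        ∑ m ∈ Finset.Icc 1 n,
          q₂ m * prefixProd (fun i => 1 - g (u i) * S (β i * x)) m :=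
  stmt_7_general S f g hS hS' hf_nonneg hf_anti hg hg_anti hg_conv v u α β hv hu hα hβ hvm hum hαm
    hβm hmajα hmajv q₁ q₂ hq₁ hq₁sum hq₂sum hst
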